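/- arXiv:1802.09630 — 2 statements merged into one kernel-verified Lean document; each statement's English description precedes it below -/
import Mathlib

section
/- For every real symmetric d×d matrix H, the columns sum Σᵢ max{λᵢ(H),0} ≤ Σᵢ λᵢ(H₁) holds for any symmetric positive semidefinite H₁ and H₂ with H = H₁ − H₂, i.e., the sum of positive parts of eigenvalues of H is at most the trace of H₁. -/
/-!
Let `P` be the spectral projection of `H` onto the eigenvectors with nonnegative eigenvalues, so
that `tr (P H) = ∑ᵢ max (λᵢ H) 0`. Since `P` and `1 - P` are positive semidefinite and the trace of
a product of two positive semidefinite matrices is nonnegative,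
`tr (P H) = tr (P H₁) - tr (P H₂) ≤ tr (P H₁) ≤ tr H₁`.
-/
open Matrix Unitary
open scoped ComplexOrder MatrixOrder

namespace Matrix

variable {𝕜 n : Type*} [RCLike 𝕜] [Fintype n] [DecidableEq n]

lemma trace_conjStarAlgAut (U : unitary (Matrix n n 𝕜)) (A : Matrix n n 𝕜) :
    (conjStarAlgAut 𝕜 _ U A).trace = A.trace := by
  rw [conjStarAlgAut_apply, trace_mul_cycle, coe_star_mul_self, one_mul]

lemma PosSemidef.conjStarAlgAut {A : Matrix n n 𝕜} (hA : A.PosSemidef)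
    (U : unitary (Matrix n n 𝕜)) : (conjStarAlgAut 𝕜 _ U A).PosSemidef := by
  rw [conjStarAlgAut_apply, star_eq_conjTranspose]
  exact hA.mul_mul_conjTranspose_same _

lemma PosSemidef.trace_mul_nonneg {A B : Matrix n n 𝕜} (hA : A.PosSemidef) (hB : B.PosSemidef) :
    0 ≤ (A * B).trace := by
  have hsqrt : CFC.sqrt A * CFC.sqrt A = A := CFC.sqrt_mul_sqrt_self A hA.nonneg
  have hsqrt_herm : (CFC.sqrt A).IsHermitian := (CFC.sqrt_nonneg A).posSemidef.isHermitian
  have h := hB.conjTranspose_mul_mul_same (CFC.sqrt A)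
  rw [hsqrt_herm.eq] at h
  calc 0 ≤ (CFC.sqrt A * B * CFC.sqrt A).trace := h.trace_nonneg
    _ = (A * B).trace := by rw [trace_mul_comm, ← Matrix.mul_assoc, hsqrt]

lemma trace_mul_sub_le_trace {P A B : Matrix n n 𝕜} (hP : P.PosSemidef)
    (hP' : (1 - P).PosSemidef) (hA : A.PosSemidef) (hB : B.PosSemidef) :
    (P * (A - B)).trace ≤ A.trace := by
  have hPA := hP'.trace_mul_nonneg hA
  have hPB := hP.trace_mul_nonneg hB
  rw [Matrix.sub_mul, one_mul, trace_sub, sub_nonneg] at hPA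
  rw [Matrix.mul_sub, trace_sub]
  exact (sub_le_self _ hPB).trans hPA

namespace IsHermitian

variable {H : Matrix n n 𝕜} (hH : H.IsHermitian)

noncomputable def nonnegSpectralProj : Matrix n n 𝕜 :=
  conjStarAlgAut 𝕜 _ hH.eigenvectorUnitary
    (diagonal fun i ↦ if 0 ≤ hH.eigenvalues i then 1 else 0)

lemma nonnegSpectralProj_posSemidef : hH.nonnegSpectralProj.PosSemidef := by
  refine PosSemidef.conjStarAlgAut (posSemidef_diagonal_iff.mpr fun i ↦ ?_) _
  split_ifs <;> simp

lemma one_sub_nonnegSpectralProj_posSemidef : (1 - hH.nonnegSpectralProj).PosSemidef := by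
  rw [nonnegSpectralProj, ← map_one (conjStarAlgAut 𝕜 _ hH.eigenvectorUnitary), ← map_sub,
    ← diagonal_one, diagonal_sub]
  refine PosSemidef.conjStarAlgAut (posSemidef_diagonal_iff.mpr fun i ↦ ?_) _
  split_ifs <;> simp

lemma trace_nonnegSpectralProj_mul_self :
    (hH.nonnegSpectralProj * H).trace = ∑ i, ((max (hH.eigenvalues i) 0 : ℝ) : 𝕜) := by
  set P := hH.nonnegSpectralProj with hP
  conv_lhs => rw [hH.spectral_theorem, hP]
  rw [nonnegSpectralProj, ← map_mul, trace_conjStarAlgAut, diagonal_mul_diagonal, trace_diagonal]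
  refine Finset.sum_congr rfl fun i _ ↦ ?_
  rcases le_or_gt 0 (hH.eigenvalues i) with h | h
  · simp [h]
  · simp [h.not_ge, h.le]

theorem sum_max_eigenvalues_zero_le {H₁ H₂ : Matrix n n 𝕜} (hH₁ : H₁.PosSemidef)
    (hH₂ : H₂.PosSemidef) (hdec : H = H₁ - H₂) :
    ∑ i, max (hH.eigenvalues i) 0 ≤ ∑ i, hH₁.isHermitian.eigenvalues i := by
  rw [← RCLike.ofReal_le_ofReal (K := 𝕜)]
  push_cast
  rw [← trace_nonnegSpectralProj_mul_self, ← hH₁.isHermitian.trace_eq_sum_eigenvalues]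
  subst hdec
  exact trace_mul_sub_le_trace hH.nonnegSpectralProj_posSemidef
    hH.one_sub_nonnegSpectralProj_posSemidef hH₁ hH₂

end IsHermitian

end Matrix

/-- Sum of positive parts of eigenvalues of H is at most the sum of
eigenvalues (= trace) of H₁, whenever H = H₁ − H₂ with H₁, H₂ PSD. -/
theorem stmt_5 (d : ℕ) (H H₁ H₂ : Matrix (Fin d) (Fin d) ℝ)
    (hH : H.IsHermitian) (hH₁ : H₁.PosSemidef) (hH₂ : H₂.PosSemidef)
    (hdec : H = H₁ - H₂) :
    ∑ i, max (hH.eigenvalues i) 0 ≤ ∑ i, hH₁.isHermitian.eigenvalues i :=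
  hH.sum_max_eigenvalues_zero_le hH₁ hH₂ hdec
end

section
/- Let X be a real-valued random variable with cdf F and E|X| < ∞, and p ∈ (0,1). The function h(x) = E[max{X − x, 0}] + (1−p)x attains its minimum over ℝ at x₀ = VaR_p(X) := inf{x : F(x) ≥ p}. -/
open MeasureTheory ProbabilityTheory Filter Topology Set

/-! The pointwise bounds `(b - a)·1{y ≥ b} ≤ (y - a)⁺ - (y - b)⁺ ≤ (b - a)·1{y > a}` (subgradient
inequalities for the convex map `c ↦ (y - c)⁺`) give, after integration against the law of `X`,
`h(x) - h(x₀) ≥ (x - x₀)(P(X ≤ x₀) - p)` for `x ≥ x₀` and `h(x) - h(x₀) ≥ (x₀ - x)(p - P(X < x₀))`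
for `x ≤ x₀`. So it suffices that `P(X < x₀) ≤ p ≤ P(X ≤ x₀)`, i.e. that `x₀` is a `p`-quantile;
for `x₀ = inf {F ≥ p}` this follows from the right-continuity of `F` and its limits `0` and `1`
at `∓∞`. -/

lemma posPart_sub_sub_posPart_sub_le_indicator (a b y : ℝ) :
    max (y - a) 0 - max (y - b) 0 ≤ (Ioi a).indicator (fun _ ↦ b - a) y := by
  rcases lt_or_ge a y with hy | hy
  · rw [indicator_of_mem (mem_Ioi.2 hy), max_eq_left (show 0 ≤ y - a by linarith)]
    linarith [le_max_left (y - b) 0]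
  · rw [indicator_of_notMem (notMem_Ioi.2 hy), max_eq_right (show y - a ≤ 0 by linarith)]
    linarith [le_max_right (y - b) 0]

lemma indicator_le_posPart_sub_sub_posPart_sub (a b y : ℝ) :
    (Ici b).indicator (fun _ ↦ b - a) y ≤ max (y - a) 0 - max (y - b) 0 := by
  rcases le_or_gt b y with hy | hy
  · rw [indicator_of_mem (mem_Ici.2 hy), max_eq_left (show 0 ≤ y - b by linarith)]
    linarith [le_max_left (y - a) 0]
  · rw [indicator_of_notMem (notMem_Ici.2 hy), max_eq_right (show y - b ≤ 0 by linarith)]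
    linarith [le_max_right (y - a) 0]

section FiniteMeasure

variable {ν : Measure ℝ} [IsFiniteMeasure ν]

lemma integrable_posPart_sub (hν : Integrable id ν) (c : ℝ) :
    Integrable (fun y ↦ max (y - c) 0) ν :=
  (hν.sub (integrable_const c)).pos_part

lemma integral_posPart_sub_sub_le (hν : Integrable id ν) (a b : ℝ) :
    ∫ y, max (y - a) 0 ∂ν - ∫ y, max (y - b) 0 ∂ν ≤ ν.real (Ioi a) * (b - a) := by
  rw [← integral_sub (integrable_posPart_sub hν a) (integrable_posPart_sub hν b),
    ← smul_eq_mul, ← integral_indicator_const _ measurableSet_Ioi]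
  exact integral_mono ((integrable_posPart_sub hν a).sub (integrable_posPart_sub hν b))
    ((integrable_const _).indicator measurableSet_Ioi)
    (posPart_sub_sub_posPart_sub_le_indicator a b)

lemma mul_le_integral_posPart_sub_sub (hν : Integrable id ν) (a b : ℝ) :
    ν.real (Ici b) * (b - a) ≤ ∫ y, max (y - a) 0 ∂ν - ∫ y, max (y - b) 0 ∂ν := by
  rw [← integral_sub (integrable_posPart_sub hν a) (integrable_posPart_sub hν b),
    ← smul_eq_mul, ← integral_indicator_const _ measurableSet_Ici]
  exact integral_mono ((integrable_const _).indicator measurableSet_Ici)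
    ((integrable_posPart_sub hν a).sub (integrable_posPart_sub hν b))
    (indicator_le_posPart_sub_sub_posPart_sub a b)

end FiniteMeasure

def IsQuantile (ν : Measure ℝ) (p x : ℝ) : Prop :=
  ν.real (Iio x) ≤ p ∧ p ≤ ν.real (Iic x)

lemma isQuantile_sInf_cdf (ν : Measure ℝ) [IsProbabilityMeasure ν] {p : ℝ}
    (hp : p ∈ Ioo 0 1) : IsQuantile ν p (sInf {x | p ≤ cdf ν x}) := by
  set S := {x | p ≤ cdf ν x}
  have hS : S.Nonempty :=
    ((tendsto_cdf_atTop ν).eventually (eventually_gt_nhds hp.2)).exists.imp fun _ h ↦ h.le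
  have hSbdd : BddBelow S := by
    obtain ⟨b, hb⟩ :=
      ((tendsto_cdf_atBot ν).eventually (eventually_lt_nhds hp.1)).exists_forall_of_atBot
    refine ⟨b, fun x hx ↦ ?_⟩
    by_contra! hxb
    exact (hb x hxb.le).not_ge hx
  have below : ∀ x < sInf S, cdf ν x < p := fun x hx ↦
    not_le.1 fun h ↦ (csInf_le hSbdd h).not_gt hx
  have above : ∀ x > sInf S, p ≤ cdf ν x := fun x hx ↦ by
    obtain ⟨s, hs, hsx⟩ := (csInf_lt_iff hSbdd hS).1 hx
    exact hs.trans ((cdf ν).mono hsx.le)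
  constructor
  · have hlim : Function.leftLim (cdf ν) (sInf S) ≤ p :=
      le_of_tendsto ((cdf ν).mono.tendsto_leftLim _)
        (eventually_nhdsWithin_of_forall fun x hx ↦ (below x hx).le)
    have := (cdf ν).measure_Iio (tendsto_cdf_atBot ν) (sInf S)
    rw [measure_cdf, sub_zero] at this
    exact ENNReal.toReal_le_of_le_ofReal hp.1.le (this.trans_le (ENNReal.ofReal_le_ofReal hlim))
  · rw [← cdf_eq_real]
    exact ge_of_tendsto (((cdf ν).right_continuous _).mono Ioi_subset_Ici_self)
      (eventually_nhdsWithin_of_forall above)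

lemma IsQuantile.integral_posPart_sub_add_le {ν : Measure ℝ} [IsProbabilityMeasure ν]
    (hν : Integrable id ν) {p x₀ : ℝ} (hq : IsQuantile ν p x₀) (x : ℝ) :
    ∫ y, max (y - x₀) 0 ∂ν + (1 - p) * x₀ ≤ ∫ y, max (y - x) 0 ∂ν + (1 - p) * x := by
  rcases le_total x₀ x with hle | hle
  · have hIoi : ν.real (Ioi x₀) ≤ 1 - p := by
      rw [← compl_Iic, probReal_compl_eq_one_sub measurableSet_Iic]; linarith [hq.2]
    have := mul_le_mul_of_nonneg_right hIoi (sub_nonneg.2 hle)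
    linarith [integral_posPart_sub_sub_le hν x₀ x]
  · have hIci : 1 - p ≤ ν.real (Ici x₀) := by
      rw [← compl_Iio, probReal_compl_eq_one_sub measurableSet_Iio]; linarith [hq.1]
    have := mul_le_mul_of_nonneg_right hIci (sub_nonneg.2 hle)
    linarith [mul_le_integral_posPart_sub_sub hν x x₀]

/-- h(x) = E[(X−x)⁺] + (1−p)x attains its minimum over ℝ at
x₀ = VaR_p(X) = inf{x : F(x) ≥ p}, where F is the cdf of X. -/
theorem stmt_18 {Ω : Type*} [MeasurableSpace Ω] (μ : Measure Ω)
    [IsProbabilityMeasure μ] (X : Ω → ℝ) (hX : Integrable X μ)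
    (p : ℝ) (hp : p ∈ Set.Ioo (0:ℝ) 1)
    (F : ℝ → ℝ) (hF : ∀ t, F t = (μ {ω | X ω ≤ t}).toReal)
    (x₀ : ℝ) (hx₀ : x₀ = sInf {x : ℝ | p ≤ F x}) :
    ∀ x : ℝ, (∫ ω, max (X ω - x₀) 0 ∂μ) + (1 - p) * x₀
      ≤ (∫ ω, max (X ω - x) 0 ∂μ) + (1 - p) * x := by
  intro x
  have hXm := hX.aemeasurable
  have : IsProbabilityMeasure (μ.map X) := Measure.isProbabilityMeasure_map hXm
  have hF_cdf : F = cdf (μ.map X) := funext fun t ↦ by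
    rw [hF, cdf_eq_real, map_measureReal_apply_of_aemeasurable hXm measurableSet_Iic]; rfl
  have hint : Integrable id (μ.map X) :=
    (integrable_map_measure aestronglyMeasurable_id hXm).2 hX
  have hmap : ∀ c : ℝ, ∫ ω, max (X ω - c) 0 ∂μ = ∫ y, max (y - c) 0 ∂(μ.map X) := fun c ↦
    (integral_map hXm ((continuous_id.sub continuous_const).max
      continuous_const).aestronglyMeasurable).symm
  rw [hmap, hmap, hx₀, hF_cdf]
  exact (isQuantile_sInf_cdf _ hp).integral_posPart_sub_add_le hint x
end
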